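/- Let P be a finite bounded poset with a CL-labeling λ. If a maximal chain m' of P has a descent at an interior element x ∈ m' with respect to λ, then there exists a unique maximal chain m of P such that m increases by a polygon move to m' and m' \ m = {x}. -/

import Mathlib

/-- A maximal chain of a bounded poset `P`, recorded as a saturated chain
(a list of elements whose consecutive entries are covers) from `⊥` to `⊤`. -/
structure MaxChain (P : Type*) [PartialOrder P] [BoundedOrder P] where
  elems : List P
  chain' : elems.Chain' (· ⋖ ·)
  head_bot : elems.head? = some ⊥
  last_top : elems.getLast? = some ⊤

variable {P : Type*} [PartialOrder P] [BoundedOrder P] [DecidableEq P]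
variable {Λ : Type*} [PartialOrder Λ]

/-- `lab` is a chain-edge labeling: the label of edge `j` (the edge between
positions `j` and `j+1` of the chain, `0`-indexed) depends only on the
bottom part of the chain below that edge. -/
def IsChainEdgeLabeling (lab : MaxChain P → ℕ → Λ) : Prop :=
  ∀ m m' : MaxChain P, ∀ i : ℕ,
    m.elems.take (i + 1) = m'.elems.take (i + 1) → ∀ j, j < i → lab m j = lab m' j

/-- `r` is a root: a saturated chain from `⊥` to `x`. -/
def IsRootTo (r : List P) (x : P) : Prop :=
  r.Chain' (· ⋖ ·) ∧ r.head? = some (⊥ : P) ∧ r.getLast? = some x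

/-- `c` is a saturated chain from `x` to `y`. -/
def IsSatChain (c : List P) (x y : P) : Prop :=
  c.Chain' (· ⋖ ·) ∧ c.head? = some x ∧ c.getLast? = some y

/-- The maximal chain `m` lies in the rooted interval `[x,y]_r`, i.e. it begins
with the root `r` (whose last entry is `x`) and passes through `y`. -/
def InRooted (m : MaxChain P) (r : List P) (y : P) : Prop :=
  m.elems.take r.length = r ∧ y ∈ m.elems

/-- The labels of `m` weakly ascend along the edges `i, i+1, …, j-1`
(the edges of the restriction of `m` between positions `i` and `j`). -/
def RestrAscending (lab : MaxChain P → ℕ → Λ) (m : MaxChain P) (i j : ℕ) : Prop :=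
  ∀ k, i ≤ k → k + 2 ≤ j → lab m k ≤ lab m (k + 1)

/-- The restriction of the maximal chain `m` to the rooted interval `[x,y]_r`,
where `x` is the top of the root `r`. -/
def restrictChain (m : MaxChain P) (r : List P) (y : P) : List P :=
  (m.elems.take (m.elems.idxOf y + 1)).drop (r.length - 1)

/-- The label sequence of `m` along edges `i, i+1, …, j-1`. -/
def restrLabels (lab : MaxChain P → ℕ → Λ) (m : MaxChain P) (i j : ℕ) : List Λ :=
  (List.range (j - i)).map fun k => lab m (i + k)

/-- The CL condition for the rooted interval with root `r` and top `y`: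
there is an ascending maximal chain of the rooted interval, any two ascending
ones coincide, and the ascending one lexicographically strictly precedes every
other maximal chain of the rooted interval. -/
def CLAt (lab : MaxChain P → ℕ → Λ) (r : List P) (y : P) : Prop :=
  (∃ m : MaxChain P, InRooted m r y ∧
      RestrAscending lab m (r.length - 1) (m.elems.idxOf y)) ∧
  (∀ m m' : MaxChain P, InRooted m r y → InRooted m' r y →
      RestrAscending lab m (r.length - 1) (m.elems.idxOf y) →
      RestrAscending lab m' (r.length - 1) (m'.elems.idxOf y) →
      restrictChain m r y = restrictChain m' r y) ∧
  (∀ m m' : MaxChain P, InRooted m r y → InRooted m' r y →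
      RestrAscending lab m (r.length - 1) (m.elems.idxOf y) →
      restrictChain m r y ≠ restrictChain m' r y →
      List.Lex (· < ·) (restrLabels lab m (r.length - 1) (m.elems.idxOf y))
        (restrLabels lab m' (r.length - 1) (m'.elems.idxOf y)))

/-- `lab` is a CL-labeling: it is a chain-edge labeling and every rooted
interval has a unique ascending maximal chain which lexicographically strictly
precedes all other maximal chains of that rooted interval. -/
def IsCLLabeling (lab : MaxChain P → ℕ → Λ) : Prop :=
  IsChainEdgeLabeling lab ∧
  ∀ (r : List P) (x y : P), IsRootTo r x → x < y → CLAt lab r y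

/-- `m` increases by a polygon move to `m'`: they differ by a polygon over some
interval `[x,y]` (with `m' ∩ (x,y) = {w}` a single new element), the part of `m`
in `[x,y]` is ascending (hence, for a CL-labeling, it is the unique ascending
chain of the rooted interval), and `x ⋖ w ⋖ y` is a descent at `w`. -/
def PolygonMove (lab : MaxChain P → ℕ → Λ) (m m' : MaxChain P) : Prop :=
  ∃ (a c b : List P) (x w y : P),
    m.elems = a ++ x :: (c ++ y :: b) ∧
    m'.elems = a ++ x :: w :: y :: b ∧
    c ≠ [] ∧ w ∉ c ∧
    RestrAscending lab m a.length (a.length + c.length + 1) ∧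
    ¬ lab m' a.length ≤ lab m' (a.length + 1)

/-- The maximal chain descent order `C(P,λ)`: the reflexive–transitive closure
of increase by polygon moves. -/
def CDLe (lab : MaxChain P → ℕ → Λ) (m m' : MaxChain P) : Prop :=
  Relation.ReflTransGen (PolygonMove lab) m m'

/-- Strict order of the maximal chain descent order. -/
def CDLt (lab : MaxChain P → ℕ → Λ) (m m' : MaxChain P) : Prop :=
  CDLe lab m m' ∧ m ≠ m'

/-- `m'` covers `m` in the maximal chain descent order. -/
def CDCovBy (lab : MaxChain P → ℕ → Λ) (m m' : MaxChain P) : Prop :=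
  CDLt lab m m' ∧ ∀ z : MaxChain P, CDLt lab m z → ¬ CDLt lab z m'

/-- `lab` is polygon complete: every polygon move gives a cover relation. -/
def PolygonComplete (lab : MaxChain P → ℕ → Λ) : Prop :=
  ∀ m m' : MaxChain P, PolygonMove lab m m' → CDCovBy lab m m'

/-- `m` has a descent at its (interior) position `i`. -/
def DescentAt (lab : MaxChain P → ℕ → Λ) (m : MaxChain P) (i : ℕ) : Prop :=
  0 < i ∧ i + 1 < m.elems.length ∧ ¬ lab m (i - 1) ≤ lab m i

/-- `m` has a descent at its interior element `z`. -/
def DescentElem (lab : MaxChain P → ℕ → Λ) (m : MaxChain P) (z : P) : Prop :=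
  ∃ i : ℕ, m.elems[i]? = some z ∧ DescentAt lab m i

/-- `m` has a descending label sequence: a descent at every interior element. -/
def DescendingMC (lab : MaxChain P → ℕ → Λ) (m : MaxChain P) : Prop :=
  ∀ i : ℕ, 0 < i → i + 1 < m.elems.length → ¬ lab m (i - 1) ≤ lab m i

/-- `m` has an ascending (weakly increasing) label sequence. -/
def AscendingMC (lab : MaxChain P → ℕ → Λ) (m : MaxChain P) : Prop :=
  ∀ i : ℕ, i + 3 ≤ m.elems.length → lab m i ≤ lab m (i + 1)


set_option linter.unusedSectionVars false
set_option maxHeartbeats 1000000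

private theorem MaxChain.ext' {m m' : MaxChain P} (h : m.elems = m'.elems) : m = m' := by
  cases m; cases m'; cases h; rfl

private theorem mc_pairwise (m : MaxChain P) : m.elems.Pairwise (· < ·) :=
  List.isChain_iff_pairwise.mp (m.chain'.imp fun _ _ h => h.lt)

private theorem mc_nodup (m : MaxChain P) : m.elems.Nodup :=
  (mc_pairwise m).imp ne_of_lt

private theorem idxOf_decomp {p q : List P} {y : P} (hy : y ∉ p) :
    (p ++ y :: q).idxOf y = p.length := by
  induction p with
  | nil => simp
  | cons a p ih =>
    simp only [List.mem_cons, not_or] at hy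
    simp [List.idxOf_cons, hy.1, Ne.symm hy.1, ih hy.2]

private theorem not_mem_left {p q : List P} {y : P} (h : (p ++ y :: q).Nodup) : y ∉ p := by
  rw [List.nodup_append] at h
  intro hyp
  exact h.2.2 y hyp y List.mem_cons_self rfl

private theorem take_mid (A c B : List P) (u y : P) :
    (A ++ u :: (c ++ y :: B)).take (A.length + c.length + 2) = A ++ u :: (c ++ [y]) := by
  have h1 : A ++ u :: (c ++ y :: B) = (A ++ u :: c) ++ y :: B := by simp
  have h2 : A.length + c.length + 2 = (A ++ u :: c).length + 1 := by simp; omega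
  rw [h1, h2, List.take_append]
  simp
  rw [List.take_of_length_le (by simp)]
  simp

private theorem idx_mid {L A c B : List P} {u y : P} (hL : L = A ++ u :: (c ++ y :: B))
    (hnd : L.Nodup) : L.idxOf y = A.length + c.length + 1 := by
  have h1 : L = (A ++ u :: c) ++ y :: B := by rw [hL]; simp
  rw [h1] at hnd ⊢
  rw [idxOf_decomp (not_mem_left hnd)]
  simp
  omega

private theorem restrict_mid {M : MaxChain P} {A c B : List P} {u y : P}
    (hM : M.elems = A ++ u :: (c ++ y :: B)) :
    restrictChain M (A ++ [u]) y = u :: (c ++ [y]) := by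
  unfold restrictChain
  rw [idx_mid hM (mc_nodup M), hM]
  rw [show A.length + c.length + 1 + 1 = A.length + c.length + 2 from rfl, take_mid]
  rw [show (A ++ [u]).length - 1 = A.length by simp]
  exact List.drop_left

private theorem getLast?_mid (X B : List P) (y : P) :
    (X ++ y :: B).getLast? = (y :: B).getLast? := by
  rw [List.getLast?_append]
  cases h : (y :: B).getLast? with
  | none => simp at h
  | some z => simp

private theorem head?_decomp (A : List P) (L L' : List P) (u : P) :
    (A ++ u :: L).head? = (A ++ u :: L').head? := by
  cases A <;> simp

private theorem chain'_tail {A L : List P} {u : P}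
    (h : List.Chain' (· ⋖ ·) (A ++ u :: L)) : List.Chain' (· ⋖ ·) (u :: L) :=
  (List.isChain_append.mp h).2.1

private theorem chain'_mid {A c B : List P} {u y : P}
    (h : List.Chain' (· ⋖ ·) (A ++ u :: (c ++ y :: B))) :
    List.Chain' (· ⋖ ·) (u :: (c ++ [y]))  := by
  have h1 : A ++ u :: (c ++ y :: B) = (A ++ u :: (c ++ [y])) ++ B := by simp
  rw [h1] at h
  exact chain'_tail (List.isChain_append.mp h).1

/-- if a maximal chain `m'` has a descent at an interior element
`x`, then there is a unique maximal chain `m` which increases by a polygon move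
to `m'` with `m' \ m = {x}`. -/
theorem statement3 [Fintype P] (lab : MaxChain P → ℕ → Λ) (hCL : IsCLLabeling lab)
    (m' : MaxChain P) (x : P) (hx : DescentElem lab m' x) :
    ∃! m : MaxChain P, PolygonMove lab m m' ∧
      m'.elems.toFinset \ m.elems.toFinset = {x} := by
  classical
  obtain ⟨i, hxi, hD⟩ := hx
  obtain ⟨hi0, hi1, hdesc⟩ := hD
  obtain ⟨hlab, hCLA⟩ := hCL
  have hilen : i < m'.elems.length := by omega
  have him1 : i - 1 < m'.elems.length := by omega
  have hx' : m'.elems[i] = x := by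
    have h := List.getElem?_eq_getElem hilen
    rw [hxi] at h
    exact (Option.some_inj.mp h).symm
  have hdec0 : m'.elems = (m'.elems.take (i-1)) ++
      m'.elems[i-1] :: x :: m'.elems[i+1] :: (m'.elems.drop (i+2)) := by
    conv_lhs => rw [← List.take_append_drop (i-1) m'.elems]
    rw [List.drop_eq_getElem_cons him1, show i - 1 + 1 = i from by omega,
        List.drop_eq_getElem_cons hilen, hx',
        List.drop_eq_getElem_cons hi1]
  obtain ⟨A, u, y, B, hdec, hAlen⟩ :
      ∃ A u y B, m'.elems = A ++ u :: x :: y :: B ∧ A.length = i - 1 :=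
    ⟨_, _, _, _, hdec0, by rw [List.length_take]; exact min_eq_left (by omega)⟩
  have hnd' : (A ++ u :: x :: y :: B).Nodup := hdec ▸ mc_nodup m'
  have hch' : (A ++ u :: x :: y :: B).Chain' (· ⋖ ·) := hdec ▸ m'.chain'
  have htail : (u :: x :: y :: B).Chain' (· ⋖ ·) := chain'_tail hch'
  have hux : u ⋖ x := (List.isChain_cons_cons.mp htail).1
  have hxy : x ⋖ y := (List.isChain_cons_cons.mp (List.isChain_cons_cons.mp htail).2).1
  have huy : u < y := hux.lt.trans hxy.lt
  have hnuy : ¬ u ⋖ y := fun h => h.2 hux.lt hxy.lt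
  have hnd2 : ((A ++ [u]) ++ x :: y :: B).Nodup := by
    rw [show (A ++ [u]) ++ x :: y :: B = A ++ u :: x :: y :: B by simp]
    exact hnd'
  have hxAu : x ∉ A ++ [u] := not_mem_left hnd2
  have hxyB : x ∉ y :: B := (List.nodup_cons.mp (List.nodup_append.mp hnd2).2.1).1
  -- the root
  have hroot : IsRootTo (A ++ [u]) u := by
    refine ⟨?_, ?_, ?_⟩
    · have h1 : A ++ u :: x :: y :: B = (A ++ [u]) ++ x :: y :: B := by simp
      rw [h1] at hch'
      exact (List.isChain_append.mp hch').1
    · have hb := m'.head_bot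
      rw [hdec] at hb
      rw [head?_decomp A (x :: y :: B) [] u] at hb
      exact hb
    · exact List.getLast?_concat
  obtain ⟨⟨m₀, hm₀r, hm₀a⟩, huniq, -⟩ := hCLA (A ++ [u]) u y hroot huy
  obtain ⟨hm₀t, hm₀y⟩ := hm₀r
  have hsplit : m₀.elems = (A ++ [u]) ++ m₀.elems.drop (A.length + 1) := by
    conv_lhs => rw [← List.take_append_drop (A.length + 1) m₀.elems]
    congr 1
    rw [show A.length + 1 = (A ++ [u]).length by simp]
    exact hm₀t
  have hyr : y ∉ A ++ [u] := by
    intro hmem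
    have hpw : (A ++ [u]).Pairwise (· < ·) :=
      List.isChain_iff_pairwise.mp (hroot.1.imp fun _ _ h => h.lt)
    rcases List.mem_append.mp hmem with h | h
    · have h2 : y < u := (List.pairwise_append.mp hpw).2.2 y h u (by simp)
      exact absurd (h2.trans huy) (lt_irrefl y)
    · simp only [List.mem_singleton] at h
      exact huy.ne' h
  have hyd : y ∈ m₀.elems.drop (A.length + 1) := by
    have hy2 := hm₀y
    rw [hsplit] at hy2
    rcases List.mem_append.mp hy2 with h | h
    · exact absurd h hyr
    · exact h
  obtain ⟨c, B₀, hcB⟩ := List.append_of_mem hyd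
  have hm₀e : m₀.elems = A ++ u :: (c ++ y :: B₀) := by rw [hsplit, hcB]; simp
  have hslice : (u :: (c ++ [y])).Chain' (· ⋖ ·) := chain'_mid (hm₀e ▸ m₀.chain')
  have hcne : c ≠ [] := by
    rintro rfl
    simp only [List.nil_append, List.isChain_cons_cons, List.isChain_singleton, and_true] at hslice
    exact hnuy (List.isChain_cons_cons.mp hslice).1
  have hidx₀ : m₀.elems.idxOf y = A.length + c.length + 1 := idx_mid hm₀e (mc_nodup m₀)
  have hrlen : (A ++ [u]).length - 1 = A.length := by simp
  have hm₀a' : RestrAscending lab m₀ A.length (A.length + c.length + 1) := by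
    rw [IsRootTo] at hroot
    rw [hrlen, hidx₀] at hm₀a
    exact hm₀a
  -- x is not an element of c
  have hxc : x ∉ c := by
    intro hxcmem
    obtain ⟨c₁, c₂, rfl⟩ := List.append_of_mem hxcmem
    have hpw : (u :: ((c₁ ++ x :: c₂) ++ [y])).Pairwise (· < ·) :=
      List.isChain_iff_pairwise.mp (hslice.imp fun _ _ h => h.lt)
    have hc₁ : c₁ = [] := by
      rcases List.eq_nil_or_concat c₁ with h | ⟨t, z, hc⟩
      · exact h
      · exfalso
        subst hc
        have hsl : List.Chain' (· ⋖ ·) (((u :: t) ++ [z]) ++ (x :: (c₂ ++ [y]))) := by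
          simpa using hslice
        have hj : z ⋖ x :=
          (List.isChain_append.mp hsl).2.2 z (List.getLast?_concat) x rfl
        have h1 : u < z := (List.pairwise_cons.mp hpw).1 z (by simp)
        exact hux.2 h1 hj.lt
    subst hc₁
    have hc₂ : c₂ = [] := by
      rcases c₂ with _ | ⟨z, t⟩
      · rfl
      · exfalso
        have hsl : List.Chain' (· ⋖ ·) (((u :: [x])) ++ (z :: (t ++ [y]))) := by
          simpa using hslice
        have hj : x ⋖ z :=
          (List.isChain_append.mp hsl).2.2 x (by simp) z rfl
        have h1 : z < y := by
          have hpw2 : List.Pairwise (· < ·) ((u :: x :: z :: t) ++ [y]) := by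
            simpa using hpw
          exact (List.pairwise_append.mp hpw2).2.2 z (by simp) y (by simp)
        exact hxy.2 hj.lt h1
    subst hc₂
    -- so c = [x] and m₀ agrees with m' below y; get ascent contradiction
    have htk : m₀.elems.take (A.length + 2 + 1) = m'.elems.take (A.length + 2 + 1) := by
      have e1 : m₀.elems = A ++ u :: ([x] ++ y :: B₀) := by simpa using hm₀e
      have e2 : m'.elems = A ++ u :: ([x] ++ y :: B) := by simpa using hdec
      rw [e1, e2,
          show A.length + 2 + 1 = A.length + List.length [x] + 2 by simp,
          take_mid, take_mid]
    have hlabeq := hlab m₀ m' (A.length + 2) htk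
    have hasc0 : lab m₀ A.length ≤ lab m₀ (A.length + 1) := by
      apply hm₀a' A.length le_rfl
      simp
    rw [hlabeq A.length (by omega), hlabeq (A.length + 1) (by omega)] at hasc0
    have h1 : i - 1 = A.length := hAlen.symm
    have h2 : i = A.length + 1 := by omega
    rw [h1, h2] at hdesc
    exact hdesc hasc0
  -- construct m
  have hmch : (A ++ u :: (c ++ y :: B)).Chain' (· ⋖ ·) := by
    rw [show A ++ u :: (c ++ y :: B) = (A ++ u :: (c ++ [y])) ++ B by simp,
        List.Chain', List.isChain_append]
    have hch2 := hch'
    rw [show A ++ u :: x :: y :: B = (A ++ [u, x]) ++ y :: B by simp] at hch2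
    have hyB := (List.isChain_append.mp hch2).2.1
    refine ⟨?_, (List.isChain_cons.mp hyB).2, ?_⟩
    · have h := m₀.chain'.take (A.length + c.length + 2)
      rwa [hm₀e, take_mid] at h
    · intro a ha b hb
      rw [show A ++ u :: (c ++ [y]) = (A ++ u :: c) ++ [y] by simp,
          List.getLast?_concat] at ha
      obtain rfl : y = a := by simpa using ha
      exact (List.isChain_cons.mp hyB).1 b hb
  have hmh : (A ++ u :: (c ++ y :: B)).head? = some ⊥ := by
    rw [head?_decomp A (c ++ y :: B) (x :: y :: B) u, ← hdec]
    exact m'.head_bot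
  have hml : (A ++ u :: (c ++ y :: B)).getLast? = some ⊤ := by
    rw [show A ++ u :: (c ++ y :: B) = (A ++ u :: c) ++ y :: B by simp, getLast?_mid]
    have h := m'.last_top
    rw [hdec, show A ++ u :: x :: y :: B = (A ++ [u, x]) ++ y :: B by simp,
        getLast?_mid] at h
    exact h
  set m : MaxChain P := ⟨A ++ u :: (c ++ y :: B), hmch, hmh, hml⟩ with hmdefn
  have hme : m.elems = A ++ u :: (c ++ y :: B) := rfl
  -- ascent of m in the polygon
  have htake_m : m.elems.take (A.length + c.length + 1 + 1) =
      m₀.elems.take (A.length + c.length + 1 + 1) := by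
    rw [hme, hm₀e, show A.length + c.length + 1 + 1 = A.length + c.length + 2 from rfl,
        take_mid, take_mid]
  have hlabs := hlab m m₀ (A.length + c.length + 1) htake_m
  have hasc_m : RestrAscending lab m A.length (A.length + c.length + 1) := by
    intro k hk1 hk2
    rw [hlabs k (by omega), hlabs (k + 1) (by omega)]
    exact hm₀a' k hk1 hk2
  -- general facts for the uniqueness argument
  have hIR : ∀ (M : MaxChain P) (c' B' : List P),
      M.elems = A ++ u :: (c' ++ y :: B') → InRooted M (A ++ [u]) y := by
    intro M c' B' hMe
    constructor
    · rw [hMe, show A ++ u :: (c' ++ y :: B') = (A ++ [u]) ++ (c' ++ y :: B') by simp]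
      exact List.take_left
    · rw [hMe]; simp
  have hRA : ∀ (M : MaxChain P) (c' B' : List P),
      M.elems = A ++ u :: (c' ++ y :: B') →
      RestrAscending lab M A.length (A.length + c'.length + 1) →
      RestrAscending lab M ((A ++ [u]).length - 1) (M.elems.idxOf y) := by
    intro M c' B' hMe h
    rwa [idx_mid hMe (mc_nodup M), hrlen]
  have hdesc' : ¬ lab m' A.length ≤ lab m' (A.length + 1) := by
    rw [show A.length = i - 1 from hAlen, show i - 1 + 1 = i from by omega]
    exact hdesc
  have hPM : PolygonMove lab m m' :=
    ⟨A, c, B, u, x, y, hme, hdec, hcne, hxc, hasc_m, hdesc'⟩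
  have hxA : x ∉ A := fun h => hxAu (List.mem_append.mpr (Or.inl h))
  have hDiff : m'.elems.toFinset \ m.elems.toFinset = {x} := by
    ext z
    simp only [Finset.mem_sdiff, List.mem_toFinset, Finset.mem_singleton, hme, hdec]
    constructor
    · rintro ⟨hz1, hz2⟩
      simp only [List.mem_append, List.mem_cons, not_or] at hz1 hz2
      tauto
    · rintro rfl
      refine ⟨by simp, ?_⟩
      simp only [List.mem_append, List.mem_cons, not_or]
      exact ⟨hxA, hux.lt.ne', hxc, hxy.lt.ne,
        fun h => hxyB (List.mem_cons.mpr (Or.inr h))⟩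
  refine ⟨m, ⟨hPM, hDiff⟩, ?_⟩
  -- uniqueness
  rintro m₁ ⟨hp₁, hdiff₁⟩
  obtain ⟨a, c₁, b, x₀, w, y₀, h1, h2, hc₁ne, hwc₁, hasc₁, hd₁⟩ := hp₁
  -- w = x
  have hnd₁ : (a ++ x₀ :: w :: y₀ :: b).Nodup := h2 ▸ mc_nodup m'
  have hnd₁' : ((a ++ [x₀]) ++ w :: y₀ :: b).Nodup := by
    rw [show (a ++ [x₀]) ++ w :: y₀ :: b = a ++ x₀ :: w :: y₀ :: b by simp]
    exact hnd₁
  have hwax : w ∉ a ++ [x₀] := not_mem_left hnd₁'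
  have hwyb : w ∉ y₀ :: b := (List.nodup_cons.mp (List.nodup_append.mp hnd₁').2.1).1
  have hwm' : w ∈ m'.elems := by rw [h2]; simp
  have hwm₁ : w ∉ m₁.elems := by
    rw [h1]
    simp only [List.mem_append, List.mem_cons, not_or]
    exact ⟨fun h => hwax (List.mem_append.mpr (Or.inl h)),
      fun h => hwax (by simp [h]), hwc₁,
      fun h => hwyb (by simp [h]),
      fun h => hwyb (List.mem_cons.mpr (Or.inr h))⟩
  have hwx : w = x := by
    have : w ∈ m'.elems.toFinset \ m₁.elems.toFinset :=
      Finset.mem_sdiff.mpr ⟨List.mem_toFinset.mpr hwm', fun h => hwm₁ (List.mem_toFinset.mp h)⟩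
    rw [hdiff₁] at this
    exact Finset.mem_singleton.mp this
  have hxw := hwx.symm
  subst hxw
  -- a.length = A.length
  have hidx1 : m'.elems.idxOf x = a.length + 1 := by
    rw [show m'.elems = (a ++ [x₀]) ++ x :: (y₀ :: b) by rw [h2]; simp,
        idxOf_decomp hwax]
    simp
  have hidx2 : m'.elems.idxOf x = A.length + 1 := by
    rw [show m'.elems = (A ++ [u]) ++ x :: (y :: B) by rw [hdec]; simp,
        idxOf_decomp hxAu]
    simp
  have hlen : a.length = A.length := by omega
  have heq2 : A ++ u :: x :: y :: B = a ++ x₀ :: x :: y₀ :: b := by rw [← hdec, ← h2]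
  obtain ⟨rfl, htl⟩ := List.append_inj heq2 hlen.symm
  have htl' : u = x₀ ∧ x = x ∧ y = y₀ ∧ B = b := by simpa using htl
  obtain ⟨rfl, -, rfl, rfl⟩ := htl'
  -- apply CL uniqueness
  have hres := huniq m₁ m (hIR m₁ c₁ B h1) (hIR m c B hme)
    (hRA m₁ c₁ B h1 hasc₁) (hRA m c B hme hasc_m)
  rw [restrict_mid h1, restrict_mid hme] at hres
  have hc : c₁ = c := by
    have h3 : c₁ ++ [y] = c ++ [y] := by
      injection hres
    simpa using h3
  apply MaxChain.ext'
  rw [h1, hme, hc]
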